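/- arXiv:0804.1028 — 7 statements merged into one kernel-verified Lean document; each statement's English description precedes it below -/
import Mathlib

section
/- The Narayana polynomials satisfy the three-term recurrence (n+1)·N_n(x) = (2n-1)(1+x)·N_{n-1}(x) - (n-2)(x-1)²·N_{n-2}(x) for all n ≥ 3, with N_1(x) = x and N_2(x) = x² + x. -/
/-!
Write `N_n = x · P_n`, so that `P_n = divX N_n` has coefficient `C(n,k)·C(n,k+1)/n` at `x^k`,
without any index shift. The recurrence for `N_n` is `x` times the same recurrence for `P_n`.
Comparing coefficients of `x^(j+2)` there and expanding, by Pascal's rule, every binomial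
coefficient of `n + 1` and `n + 2` in terms of `c_i = C(n, j+i)` for `i ≤ 3`, the claim becomes
a rational identity in `c₀, …, c₃`. It holds because consecutive binomial coefficients satisfy
`c_{i+1}·(j+i+1) = c_i·(n-j-i)`, which determines `c₁, c₂, c₃` from `c₀`. The coefficients of
`x⁰` and `x¹` are checked directly.
-/

open Polynomial

/-- The n-th Narayana polynomial N_n(x) = Σ_{k=1}^n (1/n)·C(n,k-1)·C(n,k)·x^k. -/
noncomputable def narayanaPoly (n : ℕ) : Polynomial ℝ :=
  ∑ k ∈ Finset.Icc 1 n, C ((n.choose (k - 1) * n.choose k : ℝ) / n) * X ^ k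

theorem Nat.cast_choose_succ_right_mul {R : Type*} [Ring R] (n k : ℕ) :
    (n.choose (k + 1) : R) * (k + 1) = n.choose k * (n - k) := by
  rcases le_or_gt k n with hk | hk
  · have h := congrArg (Nat.cast : ℕ → R) (Nat.choose_succ_right_eq n k)
    push_cast [Nat.cast_sub hk] at h
    exact h
  · simp [Nat.choose_eq_zero_of_lt hk, Nat.choose_eq_zero_of_lt (Nat.lt_succ_of_lt hk)]

section CoeffMul

variable {R : Type*} [CommRing R] (p : R[X])

theorem coeff_one_add_X_mul_zero : ((1 + X) * p).coeff 0 = p.coeff 0 := by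
  simp [add_mul]

theorem coeff_one_add_X_mul_succ (k : ℕ) :
    ((1 + X) * p).coeff (k + 1) = p.coeff (k + 1) + p.coeff k := by
  simp [add_mul, coeff_X_mul]

theorem coeff_X_sub_one_sq_mul_zero : ((X - 1) ^ 2 * p).coeff 0 = p.coeff 0 := by
  simp [pow_two, mul_assoc, sub_mul]

theorem coeff_X_sub_one_sq_mul_one :
    ((X - 1) ^ 2 * p).coeff 1 = p.coeff 1 - 2 * p.coeff 0 := by
  simp only [pow_two, sub_mul, one_mul, mul_assoc, coeff_sub, coeff_X_mul, mul_coeff_zero,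
    coeff_X_zero, zero_mul, zero_sub]
  ring

theorem coeff_X_sub_one_sq_mul_add_two (k : ℕ) :
    ((X - 1) ^ 2 * p).coeff (k + 2) = p.coeff (k + 2) - 2 * p.coeff (k + 1) + p.coeff k := by
  simp only [pow_two, sub_mul, one_mul, mul_assoc, coeff_sub, coeff_X_mul]
  ring

end CoeffMul

theorem narayanaPoly_one : narayanaPoly 1 = X := by
  simp [narayanaPoly]

theorem narayanaPoly_two : narayanaPoly 2 = X ^ 2 + X := by
  simp [narayanaPoly, Finset.sum_Icc_succ_top, add_comm]

theorem narayanaPoly_coeff_zero (n : ℕ) : (narayanaPoly n).coeff 0 = 0 := by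
  simp [narayanaPoly, coeff_X_pow]

theorem divX_narayanaPoly_mul_X (n : ℕ) : (narayanaPoly n).divX * X = narayanaPoly n := by
  simpa [narayanaPoly_coeff_zero] using divX_mul_X_add (narayanaPoly n)

theorem coeff_divX_narayanaPoly (n k : ℕ) :
    (narayanaPoly n).divX.coeff k = n.choose k * n.choose (k + 1) / n := by
  rw [coeff_divX]
  rcases le_or_gt (k + 1) n with hk | hk
  · simp [narayanaPoly, coeff_X_pow, hk]
  · simp [narayanaPoly, coeff_X_pow, Nat.choose_eq_zero_of_lt hk]

theorem natCast_mul_coeff_divX_narayanaPoly (n k : ℕ) :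
    (n : ℝ) * (narayanaPoly n).divX.coeff k = n.choose k * n.choose (k + 1) := by
  rcases n.eq_zero_or_pos with rfl | hn
  · simp
  · rw [coeff_divX_narayanaPoly]
    field_simp

/-- `cᵢ` stands for `C(n, j + i)`; the binomial coefficients of `n + 1` and `n + 2` have already
been expanded by Pascal's rule. -/
theorem narayana_coeff_identity {n j c₀ c₁ c₂ c₃ : ℝ} (hn : 0 ≤ n) (hj : 0 ≤ j)
    (h₁ : c₁ * (j + 1) = c₀ * (n - j))
    (h₂ : c₂ * (j + 2) = c₁ * (n - (j + 1))) (h₃ : c₃ * (j + 3) = c₂ * (n - (j + 2))) :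
    (n + 3) * ((c₀ + 2 * c₁ + c₂) * (c₁ + 2 * c₂ + c₃) / (n + 2)) =
      (2 * n + 3) * ((c₁ + c₂) * (c₂ + c₃) + (c₀ + c₁) * (c₁ + c₂)) / (n + 1) -
        (c₂ * c₃ - 2 * c₁ * c₂ + c₀ * c₁) := by
  rw [← eq_div_iff (by positivity)] at h₁ h₂ h₃
  subst h₁ h₂ h₃
  field_simp
  ring

theorem divX_narayanaPoly_recurrence (n : ℕ) :
    C ((n : ℝ) + 3) * (narayanaPoly (n + 2)).divX =
      C (2 * (n : ℝ) + 3) * (1 + X) * (narayanaPoly (n + 1)).divX -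
        C (n : ℝ) * (X - 1) ^ 2 * (narayanaPoly n).divX := by
  ext (_ | _ | j) <;>
    simp only [coeff_C_mul, coeff_sub, mul_assoc, zero_add, coeff_one_add_X_mul_zero,
      coeff_X_sub_one_sq_mul_zero, coeff_one_add_X_mul_succ, coeff_X_sub_one_sq_mul_one,
      coeff_X_sub_one_sq_mul_add_two] <;>
    -- absorb the factor `n` before expanding, so that no `n * (x / n)` with `n = 0` arises
    simp only [mul_sub, mul_add, mul_left_comm _ (2 : ℝ), natCast_mul_coeff_divX_narayanaPoly] <;>
    simp only [coeff_divX_narayanaPoly]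
  · push_cast [Nat.choose_zero_right, Nat.choose_one_right]
    field_simp
    ring
  · push_cast [Nat.choose_zero_right, Nat.choose_one_right, Nat.cast_choose_two]
    field_simp
    ring
  · simp only [Nat.choose_succ_succ', add_assoc, Nat.reduceAdd]
    push_cast
    have h₁ := Nat.cast_choose_succ_right_mul (R := ℝ) n j
    have h₂ := Nat.cast_choose_succ_right_mul (R := ℝ) n (j + 1)
    have h₃ := Nat.cast_choose_succ_right_mul (R := ℝ) n (j + 2)
    simp only [add_assoc, Nat.reduceAdd] at h₂ h₃
    push_cast at h₂ h₃
    linear_combination narayana_coeff_identity (c₂ := n.choose (j + 2)) (c₃ := n.choose (j + 3))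
      n.cast_nonneg' j.cast_nonneg' h₁ (by linear_combination h₂) (by linear_combination h₃)

/-- The three-term recurrence for Narayana polynomials, with
N_1(x) = x and N_2(x) = x² + x. -/
theorem narayana_recurrence :
    narayanaPoly 1 = X ∧ narayanaPoly 2 = X ^ 2 + X ∧
    ∀ n : ℕ, 3 ≤ n →
      C ((n : ℝ) + 1) * narayanaPoly n =
        C (2 * (n : ℝ) - 1) * (1 + X) * narayanaPoly (n - 1) -
          C ((n : ℝ) - 2) * (X - 1) ^ 2 * narayanaPoly (n - 2) := by
  refine ⟨narayanaPoly_one, narayanaPoly_two, fun n hn => ?_⟩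
  obtain ⟨k, rfl⟩ := Nat.exists_eq_add_of_le' (Nat.le_of_succ_le hn)
  simp only [Nat.add_sub_cancel, Nat.add_succ_sub_one]
  rw [← divX_narayanaPoly_mul_X (k + 2), ← divX_narayanaPoly_mul_X (k + 1),
    ← divX_narayanaPoly_mul_X k]
  push_cast
  rw [show (k : ℝ) + 2 + 1 = k + 3 by ring, show 2 * ((k : ℝ) + 2) - 1 = 2 * k + 3 by ring,
    show (k : ℝ) + 2 - 2 = k by ring]
  linear_combination X * divX_narayanaPoly_recurrence k
end

section
/- For every even positive integer n, N_n(-1) = 0; that is, Σ_{k=1}^{n} (-1)^k·N(n,k) = 0 when n is even. -/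
open Polynomial

/-! The coefficients of `N_n` are palindromic, `N(n, n+1-k) = N(n, k)`, and for even `n` the
reflection `k ↦ n + 1 - k` of `{1, …, n}` has no fixed point and flips the sign `(-1)^k`, so the
terms of `N_n(-1)` cancel in pairs. -/

theorem neg_one_pow_sub_of_odd {R : Type*} [Ring R] {m k : ℕ} (hm : Odd m) (hk : k ≤ m) :
    (-1 : R) ^ (m - k) = -(-1) ^ k := by
  have h : (-1 : R) ^ (m - k) * (-1) ^ k = -1 := by
    rw [← pow_add, Nat.sub_add_cancel hk, hm.neg_one_pow]
  calc (-1 : R) ^ (m - k) = (-1) ^ (m - k) * (-1) ^ k * (-1) ^ k := by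
        rw [mul_assoc, ← pow_add, ← two_mul, pow_mul, neg_one_sq, one_pow, mul_one]
    _ = -(-1) ^ k := by rw [h, neg_one_mul]

theorem Finset.sum_Icc_neg_one_pow_mul_eq_zero_of_symm {R : Type*} [Ring R] {n : ℕ}
    (hn : Even n) (f : ℕ → R) (hf : ∀ k ∈ Finset.Icc 1 n, f (n + 1 - k) = f k) :
    ∑ k ∈ Finset.Icc 1 n, (-1) ^ k * f k = 0 := by
  refine Finset.sum_involution (fun k _ => n + 1 - k) (fun k hk => ?_) (fun k hk _ => ?_)
    (fun k hk => ?_) (fun k hk => ?_) <;> rw [Finset.mem_Icc] at hk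
  · rw [hf k (Finset.mem_Icc.2 hk), neg_one_pow_sub_of_odd hn.add_one (by omega)]
    noncomm_ring
  · obtain ⟨m, rfl⟩ := hn
    omega
  · exact Finset.mem_Icc.2 (by omega)
  · omega

theorem Nat.choose_mul_choose_succ_sub {n k : ℕ} (hk₁ : 1 ≤ k) (hk : k ≤ n) :
    n.choose (n + 1 - k - 1) * n.choose (n + 1 - k) = n.choose (k - 1) * n.choose k := by
  rw [mul_comm, Nat.choose_symm_of_eq_add (by omega : n = (n + 1 - k - 1) + k),
    Nat.choose_symm_of_eq_add (by omega : n = (n + 1 - k) + (k - 1))]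

theorem narayana_eval_neg_one_even_general (n : ℕ) (he : Even n) :
    (narayanaPoly n).eval (-1) = 0 := by
  simp only [narayanaPoly, eval_finsetSum, eval_mul, eval_C, eval_pow, eval_X]
  simp_rw [mul_comm _ ((-1 : ℝ) ^ _)]
  refine Finset.sum_Icc_neg_one_pow_mul_eq_zero_of_symm he _ fun k hk => ?_
  rw [Finset.mem_Icc] at hk
  rw [← Nat.cast_mul, ← Nat.cast_mul, Nat.choose_mul_choose_succ_sub hk.1 hk.2]

/-- For even positive n, N_n(-1) = 0. -/
theorem narayana_eval_neg_one_even (n : ℕ) (hn : 0 < n) (he : Even n) :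
    (narayanaPoly n).eval (-1) = 0 :=
  narayana_eval_neg_one_even_general n he
end

section
/- For every odd positive integer n, N_n(-1) ≠ 0; that is, Σ_{k=1}^{n} (-1)^k·N(n,k) ≠ 0 when n is odd. -/
/-!
Up to the factor `1 / n`, `N_n(-1) = Σ_k (-1)^k C(n,k) C(n,n+1-k)` (using `C(n,k-1) = C(n,n+1-k)`),
which is the coefficient of `X^(n+1)` in `(1 - X)^n (1 + X)^n = (1 - X^2)^n`. For odd `n = 2m - 1`
this coefficient is `(-1)^m C(n,m) ≠ 0`.
-/

open Polynomial

open Finset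

section AlternatingVandermonde

variable {R : Type*} [CommRing R]

theorem coeff_one_sub_X_pow (n k : ℕ) :
    ((1 - X : R[X]) ^ n).coeff k = (-1) ^ k * n.choose k := by
  have h : (1 - X : R[X]) ^ n = ((1 + X) ^ n).comp (C (-1) * X) := by simp [sub_eq_add_neg]
  rw [h, comp_C_mul_X_coeff, coeff_one_add_X_pow, mul_comm]

theorem coeff_one_sub_X_sq_pow_two_mul (n m : ℕ) :
    ((1 - X ^ 2 : R[X]) ^ n).coeff (2 * m) = (-1) ^ m * n.choose m := by
  have h : (1 - X ^ 2 : R[X]) ^ n = expand R 2 ((1 - X) ^ n) := by simp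
  rw [h, coeff_expand_mul' two_pos, coeff_one_sub_X_pow]

theorem sum_antidiagonal_neg_one_pow_mul_choose_mul_choose (n m : ℕ) :
    ∑ p ∈ antidiagonal (2 * m), (-1 : R) ^ p.1 * n.choose p.1 * n.choose p.2 =
      (-1) ^ m * n.choose m := by
  rw [← coeff_one_sub_X_sq_pow_two_mul, show (1 - X ^ 2 : R[X]) = (1 - X) * (1 + X) by ring,
    mul_pow, coeff_mul]
  simp only [coeff_one_sub_X_pow, coeff_one_add_X_pow]

theorem sum_Icc_neg_one_pow_mul_choose_pred_mul_choose (n : ℕ) :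
    ∑ k ∈ Icc 1 n, (-1 : R) ^ k * (n.choose (k - 1) * n.choose k) =
      ∑ p ∈ antidiagonal (n + 1), (-1 : R) ^ p.1 * n.choose p.1 * n.choose p.2 := by
  rw [Nat.sum_antidiagonal_eq_sum_range_succ (fun i j => (-1 : R) ^ i * n.choose i * n.choose j),
    sum_range_succ, sum_range_succ']
  simp only [Nat.choose_succ_self, Nat.cast_zero, mul_zero, zero_mul, add_zero, tsub_zero]
  rw [← Ico_add_one_right_eq_Icc 1 n, sum_Ico_eq_sum_range, Nat.add_sub_cancel]
  refine sum_congr rfl fun k hk => ?_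
  rw [Nat.add_sub_cancel_left, Nat.add_sub_add_right, Nat.choose_symm (mem_range.mp hk).le,
    add_comm 1]
  ring

end AlternatingVandermonde

theorem narayanaPoly_eval_neg_one (n : ℕ) :
    (narayanaPoly n).eval (-1) =
      (∑ p ∈ antidiagonal (n + 1), (-1 : ℝ) ^ p.1 * n.choose p.1 * n.choose p.2) / n := by
  rw [← sum_Icc_neg_one_pow_mul_choose_pred_mul_choose, narayanaPoly, eval_finsetSum, sum_div]
  refine sum_congr rfl fun k _ => ?_
  simp only [eval_mul, eval_C, eval_pow, eval_X]
  ring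

theorem narayana_eval_neg_one_odd_general (n : ℕ) (ho : Odd n) :
    (narayanaPoly n).eval (-1) ≠ 0 := by
  obtain ⟨t, rfl⟩ := ho
  rw [narayanaPoly_eval_neg_one, show 2 * t + 1 + 1 = 2 * (t + 1) by ring,
    sum_antidiagonal_neg_one_pow_mul_choose_mul_choose]
  have hchoose : ((2 * t + 1).choose (t + 1) : ℝ) ≠ 0 := by
    exact_mod_cast (Nat.choose_pos (by omega)).ne'
  exact div_ne_zero (mul_ne_zero (pow_ne_zero _ (by norm_num)) hchoose) (by positivity)

/-- For odd positive n, N_n(-1) ≠ 0. -/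
theorem narayana_eval_neg_one_odd (n : ℕ) (hn : 0 < n) (ho : Odd n) :
    (narayanaPoly n).eval (-1) ≠ 0 :=
  narayana_eval_neg_one_odd_general n ho
end

section
/- For every n ≥ 1, the Narayana polynomial N_n(x), viewed as a polynomial over the reals, has all its roots real. Moreover all roots are non-positive. -/
/-!
The Cayley transform `w = (1 + z) / (1 - z)` turns `(1 - z) ^ (n + 1) · G(w)`, where
`G = D^(n-1) [(X - 1)^n (X + 1)^n]`, into a constant multiple of `N_n(z)`: expanding `G` by
Leibniz's rule gives a combination of `(X - 1)^(k+1) (X + 1)^(n-k)`, whose coefficients are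
`(n-1)! · C(n,k) · C(n,k+1)`, and the transform maps these products to `2^(n+1) z^(k+1)`.
By Rolle's theorem the derivatives of a real polynomial with only real roots again have only real
roots, so `G` does. Hence every root `z` of `N_n` is the inverse transform `(w - 1) / (w + 1)` of a
real number `w`, so `z` is real; it cannot be positive since `N_n` has positive coefficients.
-/

open Polynomial

namespace Polynomial

theorem Splits.derivative {p : ℝ[X]} (hp : p.Splits) : p.derivative.Splits := by
  rw [splits_iff_card_roots] at hp ⊢
  have := p.card_roots_le_derivative
  have := p.derivative.card_roots'
  have := p.natDegree_derivative_le
  omega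

theorem Splits.iterate_derivative {p : ℝ[X]} (hp : p.Splits) (k : ℕ) :
    (Polynomial.derivative^[k] p).Splits := by
  induction k with
  | zero => exact hp
  | succ k ih => rw [Function.iterate_succ_apply']; exact ih.derivative

theorem natDegree_iterate_derivative_eq {R : Type*} [Semiring R] [IsAddTorsionFree R]
    (p : R[X]) (k : ℕ) : (derivative^[k] p).natDegree = p.natDegree - k := by
  induction k with
  | zero => rfl
  | succ k ih => rw [Function.iterate_succ_apply', natDegree_derivative, ih, Nat.sub_sub]

end Polynomial

section Cayley

variable {K : Type*} [Field K] {z : K}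

theorem cayley_sub_one (hz : z ≠ 1) : (1 + z) / (1 - z) - 1 = 2 * z / (1 - z) := by
  rw [div_sub_one (sub_ne_zero.mpr hz.symm)]; ring

theorem cayley_add_one (hz : z ≠ 1) : (1 + z) / (1 - z) + 1 = 2 / (1 - z) := by
  rw [div_add_one (sub_ne_zero.mpr hz.symm)]; ring

theorem one_sub_pow_mul_cayley (hz : z ≠ 1) (i j : ℕ) :
    (1 - z) ^ (i + j) * (((1 + z) / (1 - z) - 1) ^ i * ((1 + z) / (1 - z) + 1) ^ j)
      = 2 ^ (i + j) * z ^ i := by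
  have : 1 - z ≠ 0 := sub_ne_zero.mpr hz.symm
  rw [cayley_sub_one hz, cayley_add_one hz, div_pow, div_pow, mul_pow, pow_add, pow_add]
  field_simp

theorem eq_cayley_inv (h2 : (2 : K) ≠ 0) (hz : z ≠ 1) :
    z = ((1 + z) / (1 - z) - 1) / ((1 + z) / (1 - z) + 1) := by
  have : 1 - z ≠ 0 := sub_ne_zero.mpr hz.symm
  rw [cayley_sub_one hz, cayley_add_one hz]
  field_simp

end Cayley

theorem Nat.choose_mul_descFactorial_mul_descFactorial {n k : ℕ} (hk : k < n) :
    (n - 1).choose k * n.descFactorial (n - 1 - k) * n.descFactorial k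
      = (n - 1).factorial * (n.choose k * n.choose (k + 1)) := by
  have hsymm : n.choose (n - 1 - k) = n.choose (k + 1) := by
    rw [show n - 1 - k = n - (k + 1) by omega, Nat.choose_symm hk]
  rw [Nat.descFactorial_eq_factorial_mul_choose, Nat.descFactorial_eq_factorial_mul_choose, hsymm,
    ← Nat.choose_mul_factorial_mul_factorial (show k ≤ n - 1 by omega)]
  ring

/-- Up to a constant, `(1 - X²)` times the Jacobi polynomial `P_(n-1)^(1,1)`
(Rodrigues' formula). -/
noncomputable def rodriguesPoly (n : ℕ) : ℝ[X] :=
  derivative^[n - 1] ((X - C 1) ^ n * (X + C 1) ^ n)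

theorem rodriguesPoly_eq_sum {n : ℕ} (hn : 1 ≤ n) :
    rodriguesPoly n = ∑ k ∈ Finset.range n,
      C ((n - 1).factorial * (n.choose k * n.choose (k + 1)) : ℝ) *
        ((X - C 1) ^ (k + 1) * (X + C 1) ^ (n - k)) := by
  rw [rodriguesPoly, iterate_derivative_mul, Nat.succ_eq_add_one, Nat.sub_add_cancel hn]
  refine Finset.sum_congr rfl fun k hk => ?_
  have hk : k < n := Finset.mem_range.mp hk
  rw [iterate_derivative_X_sub_pow, iterate_derivative_X_add_pow,
    show n - (n - 1 - k) = k + 1 by omega, smul_mul_assoc, mul_smul_comm, smul_smul, smul_smul,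
    nsmul_eq_mul, ← C_eq_natCast,
    Nat.choose_mul_descFactorial_mul_descFactorial hk]
  norm_cast

theorem rodriguesPoly_splits (n : ℕ) : (rodriguesPoly n).Splits :=
  Splits.iterate_derivative (((Splits.X_sub_C 1).pow n).mul ((Splits.X_add_C 1).pow n)) _

theorem rodriguesPoly_natDegree {n : ℕ} (hn : 1 ≤ n) : (rodriguesPoly n).natDegree = n + 1 := by
  rw [rodriguesPoly, natDegree_iterate_derivative_eq,
    natDegree_mul (pow_ne_zero _ (X_sub_C_ne_zero 1)) (pow_ne_zero _ (X_add_C_ne_zero 1)),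
    natDegree_pow, natDegree_pow, natDegree_X_sub_C, natDegree_X_add_C]
  omega

theorem rodriguesPoly_ne_zero {n : ℕ} (hn : 1 ≤ n) : rodriguesPoly n ≠ 0 :=
  ne_zero_of_natDegree_gt (n := 0) (by rw [rodriguesPoly_natDegree hn]; omega)

theorem narayanaPoly_eq_sum_range (n : ℕ) :
    narayanaPoly n =
      ∑ k ∈ Finset.range n, C ((n.choose k * n.choose (k + 1) : ℝ) / n) * X ^ (k + 1) := by
  rw [narayanaPoly, ← Finset.Ico_add_one_right_eq_Icc, Finset.sum_Ico_eq_sum_range]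
  refine Finset.sum_congr rfl fun k _ => ?_
  rw [add_comm 1 k, Nat.add_sub_cancel]

theorem narayanaPoly_eval_pos {n : ℕ} (hn : 1 ≤ n) {x : ℝ} (hx : 0 < x) :
    0 < (narayanaPoly n).eval x := by
  rw [narayanaPoly_eq_sum_range, eval_finsetSum]
  refine Finset.sum_pos (fun k hk => ?_) (Finset.nonempty_range_iff.mpr (by omega))
  have hk : k < n := Finset.mem_range.mp hk
  have := Nat.choose_pos hk.le
  have := Nat.choose_pos (Nat.succ_le_of_lt hk)
  simp only [eval_mul, eval_C, eval_pow, eval_X]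
  positivity

theorem aeval_ofReal_narayanaPoly_ne_zero {n : ℕ} (hn : 1 ≤ n) {x : ℝ} (hx : 0 < x) :
    aeval (x : ℂ) (narayanaPoly n) ≠ 0 := by
  rw [← Complex.coe_algebraMap, aeval_algebraMap_apply_eq_algebraMap_eval, Complex.coe_algebraMap,
    Complex.ofReal_ne_zero]
  exact (narayanaPoly_eval_pos hn hx).ne'

theorem one_sub_pow_mul_aeval_cayley_rodriguesPoly {n : ℕ} (hn : 1 ≤ n) {z : ℂ}
    (hz : z ≠ 1) :
    (1 - z) ^ (n + 1) * aeval ((1 + z) / (1 - z)) (rodriguesPoly n)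
      = 2 ^ (n + 1) * n.factorial * aeval z (narayanaPoly n) := by
  rw [rodriguesPoly_eq_sum hn, narayanaPoly_eq_sum_range, map_sum, map_sum, Finset.mul_sum,
    Finset.mul_sum]
  refine Finset.sum_congr rfl fun k hk => ?_
  have hk : k < n := Finset.mem_range.mp hk
  simp only [map_mul, map_pow, map_sub, map_add, aeval_X, aeval_C, map_one]
  rw [mul_left_comm, show n + 1 = (k + 1) + (n - k) by omega, one_sub_pow_mul_cayley hz,
    ← Nat.mul_factorial_pred (by omega : n ≠ 0)]
  have : (n : ℂ) ≠ 0 := by exact_mod_cast (by omega : n ≠ 0)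
  push_cast
  field_simp

/-- Every complex root of N_n(x) is real and non-positive. -/
theorem narayana_roots_real_nonpos (n : ℕ) (hn : 1 ≤ n) (z : ℂ)
    (hz : Polynomial.aeval z (narayanaPoly n) = 0) :
    z.im = 0 ∧ z.re ≤ 0 := by
  have hz1 : z ≠ 1 := by
    rintro rfl
    exact aeval_ofReal_narayanaPoly_ne_zero hn one_pos (by exact_mod_cast hz)
  have hw : aeval ((1 + z) / (1 - z)) (rodriguesPoly n) = 0 := by
    have h := one_sub_pow_mul_aeval_cayley_rodriguesPoly hn hz1
    rw [hz, mul_zero] at h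
    exact (mul_eq_zero.mp h).resolve_left (pow_ne_zero _ (sub_ne_zero.mpr hz1.symm))
  obtain ⟨r, hr⟩ := (rodriguesPoly_splits n).mem_range_of_isRoot (rodriguesPoly_ne_zero hn)
    (i := algebraMap ℝ ℂ) (by rwa [IsRoot, eval_map_algebraMap])
  obtain ⟨x, rfl⟩ : ∃ x : ℝ, z = x :=
    ⟨(r - 1) / (r + 1), by rw [eq_cayley_inv two_ne_zero hz1, ← hr]; push_cast; rfl⟩
  refine ⟨Complex.ofReal_im x, ?_⟩
  by_contra! hx
  exact aeval_ofReal_narayanaPoly_ne_zero hn (by rwa [Complex.ofReal_re] at hx) hz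
end

section
/- For every even positive integer n, -1 is a simple root of N_n(x), i.e., N_n(-1) = 0 but N_n'(-1) ≠ 0. -/
/-!
Reflecting `k ↦ n + 1 - k` preserves the Narayana coefficients and, for even `n`, flips the sign
of `(-1)^k`, so `N_n(-1) = 0`. Since `k · C(n, k) = n · C(n - 1, k - 1)`, the value `N_n'(-1)` is
`∑ⱼ (-1)^j C(n, j) C(n - 1, j)`, the coefficient of `X^(n-1)` in
`(1 - X)^n (1 + X)^(n-1) = (1 - X)(1 - X²)^(n-1)`. For `n = 2i + 2` only the term
`-X · (1 - X²)^(2i+1)` contributes, giving `-(-1)^i C(2i + 1, i) ≠ 0`.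
-/

open Polynomial

open Finset

namespace Polynomial

variable {R : Type*} [CommRing R]

theorem coeff_one_sub_X_pow (m k : ℕ) :
    ((1 - X : R[X]) ^ m).coeff k = (-1) ^ k * m.choose k := by
  rw [show (1 - X : R[X]) = C (-1) * (X + C (-1)) by simp; ring, mul_pow, ← C_pow,
    coeff_C_mul, coeff_X_add_C_pow]
  rcases le_or_gt k m with hkm | hmk
  · rw [← mul_assoc, ← pow_add, show m + (m - k) = k + 2 * (m - k) by omega, pow_add, pow_mul]
    simp
  · simp [Nat.choose_eq_zero_of_lt hmk]

theorem coeff_one_sub_X_sq_pow_of_odd (m : ℕ) {k : ℕ} (hk : Odd k) :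
    ((1 - X ^ 2 : R[X]) ^ m).coeff k = 0 := by
  rw [show (1 - X ^ 2 : R[X]) ^ m = expand R 2 ((1 - X) ^ m) by simp, coeff_expand two_pos,
    if_neg (by rwa [← even_iff_two_dvd, Nat.not_even_iff_odd])]

theorem coeff_one_sub_X_sq_pow_two_mul (m i : ℕ) :
    ((1 - X ^ 2 : R[X]) ^ m).coeff (2 * i) = (-1) ^ i * m.choose i := by
  rw [show (1 - X ^ 2 : R[X]) ^ m = expand R 2 ((1 - X) ^ m) by simp, coeff_expand two_pos,
    if_pos (dvd_mul_right 2 i), Nat.mul_div_cancel_left i two_pos, coeff_one_sub_X_pow]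

theorem sum_range_neg_one_pow_mul_choose_mul_choose (n m : ℕ) :
    ∑ j ∈ range (m + 1), (-1 : R) ^ j * n.choose j * m.choose j =
      ((1 - X) ^ n * (1 + X) ^ m : R[X]).coeff m := by
  rw [coeff_mul, Nat.sum_antidiagonal_eq_sum_range_succ_mk]
  refine sum_congr rfl fun j hj => ?_
  rw [coeff_one_sub_X_pow, coeff_one_add_X_pow,
    Nat.choose_symm (Nat.lt_succ_iff.mp (mem_range.mp hj))]

theorem sum_range_neg_one_pow_mul_choose_mul_choose_of_odd (i : ℕ) :
    ∑ j ∈ range (2 * i + 2), (-1 : R) ^ j * (2 * i + 2).choose j * (2 * i + 1).choose j =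
      -((-1) ^ i * (2 * i + 1).choose i) := by
  have hfactor : ((1 - X) ^ (2 * i + 2) * (1 + X) ^ (2 * i + 1) : R[X]) =
      (1 - X ^ 2) ^ (2 * i + 1) - X * (1 - X ^ 2) ^ (2 * i + 1) := by
    rw [show (1 - X ^ 2 : R[X]) = (1 - X) * (1 + X) by ring, mul_pow]; ring
  rw [sum_range_neg_one_pow_mul_choose_mul_choose, hfactor, coeff_sub, coeff_X_mul,
    coeff_one_sub_X_sq_pow_of_odd _ (odd_two_mul_add_one i), coeff_one_sub_X_sq_pow_two_mul,
    zero_sub]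

end Polynomial

theorem Finset.sum_Icc_eq_zero_of_antisymm {M : Type*} [AddCommMonoid M] {n : ℕ}
    (hn : Even n) (f : ℕ → M) (hf : ∀ k ∈ Icc 1 n, f k + f (n + 1 - k) = 0) :
    ∑ k ∈ Icc 1 n, f k = 0 :=
  sum_involution (fun k _ => n + 1 - k) hf
    (fun k _ _ h => by obtain ⟨r, rfl⟩ := hn; omega)
    (fun k hk => by simp only [mem_Icc] at hk ⊢; omega)
    (fun k hk => by simp only [mem_Icc] at hk; omega)

theorem narayanaPoly_eval_neg_one_s11 {n : ℕ} (hn : Even n) : (narayanaPoly n).eval (-1) = 0 := by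
  rw [narayanaPoly, eval_finsetSum]
  refine sum_Icc_eq_zero_of_antisymm hn _ fun k hk => ?_
  simp only [mem_Icc] at hk
  have hchoose :
      n.choose (n + 1 - k - 1) * n.choose (n + 1 - k) = n.choose k * n.choose (k - 1) := by
    rw [Nat.choose_symm_of_eq_add (show n = n + 1 - k - 1 + k by omega),
      Nat.choose_symm_of_eq_add (show n = n + 1 - k + (k - 1) by omega)]
  have hsign : (-1 : ℝ) ^ (n + 1 - k) = -(-1) ^ k := by
    rw [pow_sub₀ _ (by norm_num) (by omega), pow_succ, hn.neg_one_pow, ← inv_pow, inv_neg,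
      inv_one]
    ring
  simp only [eval_mul, eval_C, eval_pow, eval_X]
  rw [hsign, ← Nat.cast_mul, ← Nat.cast_mul, hchoose, Nat.cast_mul, Nat.cast_mul]
  ring

theorem derivative_narayanaPoly_succ (m : ℕ) :
    derivative (narayanaPoly (m + 1)) =
      ∑ j ∈ range (m + 1), C (((m + 1).choose j * m.choose j : ℕ) : ℝ) * X ^ j := by
  rw [narayanaPoly, derivative_sum, ← Ico_add_one_right_eq_Icc, sum_Ico_eq_sum_range,
    Nat.add_sub_cancel]
  refine sum_congr rfl fun j _ => ?_
  rw [derivative_C_mul_X_pow, add_comm 1 j, Nat.add_sub_cancel]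
  have h : ((m + 1 : ℕ) : ℝ) * m.choose j = (m + 1).choose (j + 1) * (j + 1 : ℕ) := by
    exact_mod_cast Nat.add_one_mul_choose_eq m j
  congr 2
  rw [Nat.cast_mul, div_mul_eq_mul_div, div_eq_iff (by positivity)]
  linear_combination (-((m + 1).choose j : ℝ)) * h

theorem narayanaPoly_derivative_eval_neg_one (i : ℕ) :
    (derivative (narayanaPoly (2 * i + 2))).eval (-1) = -((-1) ^ i * (2 * i + 1).choose i) := by
  rw [derivative_narayanaPoly_succ, eval_finsetSum,
    ← sum_range_neg_one_pow_mul_choose_mul_choose_of_odd]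
  refine sum_congr rfl fun j _ => ?_
  simp only [eval_mul, eval_C, eval_pow, eval_X, Nat.cast_mul]
  ring

/-- For even positive n, -1 is a simple root of N_n(x). -/
theorem narayana_neg_one_simple_root (n : ℕ) (hn : 0 < n) (he : Even n) :
    (narayanaPoly n).eval (-1) = 0 ∧
      (Polynomial.derivative (narayanaPoly n)).eval (-1) ≠ 0 := by
  refine ⟨narayanaPoly_eval_neg_one_s11 he, ?_⟩
  obtain ⟨i, rfl⟩ : ∃ i, n = 2 * i + 2 := ⟨n / 2 - 1, by obtain ⟨r, rfl⟩ := he; omega⟩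
  rw [narayanaPoly_derivative_eval_neg_one, neg_ne_zero]
  exact mul_ne_zero (pow_ne_zero _ (by norm_num))
    (by exact_mod_cast (Nat.choose_pos (by omega)).ne')
end

section
/- For every n ≥ 2, the only common root of N_n(x) and N_{n-1}(x) is 0; that is, the greatest common divisor of N_n(x) and N_{n-1}(x) over ℚ is x (up to units). -/
/-!
Write `N_n = X * M_n`. The quotients satisfy the three-term recurrence
`(m + 3) M_{m+2} + m (X - 1)^2 M_m = (2m + 3)(X + 1) M_{m+1}`, which coefficientwise follows from
the two contiguous relations of the Narayana numbers (shifting `n` together with `k`, or `n`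
alone). Since `M_n(1) > 0`, `M_{m+1}` is prime to `X - 1`, so the recurrence carries coprimality of
consecutive `M_n` up from `M_1 = 1`. Hence `gcd(N_n, N_{n-1}) = X * gcd(M_n, M_{n-1}) ~ X`.
-/

open Polynomial

theorem IsCoprime.of_mul_add_mul_eq_mul {R : Type*} [CommRing R] {a b c p q r : R}
    (h : a * r + b * p = c * q) (hqp : IsCoprime q p) (hqb : IsCoprime q b) : IsCoprime q r := by
  have hqbp : IsCoprime q (-(b * p) + q * c) := (hqb.mul_right hqp).neg_right.add_mul_left_right c
  rw [show -(b * p) + q * c = a * r by linear_combination -h] at hqbp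
  exact hqbp.of_mul_right_right

theorem IsCoprime.associated_gcd_mul_mul {R : Type*} [EuclideanDomain R] [DecidableEq R] {a b : R}
    (h : IsCoprime a b) (c : R) : Associated (EuclideanDomain.gcd (c * a) (c * b)) c := by
  obtain ⟨u, v, huv⟩ := h
  refine associated_of_dvd_dvd ?_ (EuclideanDomain.dvd_gcd (dvd_mul_right c a) (dvd_mul_right c b))
  calc EuclideanDomain.gcd (c * a) (c * b) ∣ u * (c * a) + v * (c * b) :=
        dvd_add ((EuclideanDomain.gcd_dvd_left _ _).mul_left u)
          ((EuclideanDomain.gcd_dvd_right _ _).mul_left v)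
    _ = c := by linear_combination c * huv

theorem Nat.cast_choose_mul_add_one {R : Type*} [Ring R] (n k : ℕ) :
    (n.choose k * (n + 1) : R) = (n + 1).choose k * (n + 1 - k) := by
  rcases le_or_gt k (n + 1) with hk | hk
  · have h := congr(($(Nat.choose_mul_succ_eq n k) : R))
    push_cast [hk] at h
    exact h
  · simp [Nat.choose_eq_zero_of_lt hk, Nat.choose_eq_zero_of_lt (by omega : n < k)]

/-- The n-th Narayana polynomial over ℚ. -/
noncomputable def narayanaPolyQ (n : ℕ) : Polynomial ℚ :=
  ∑ k ∈ Finset.Icc 1 n, C ((n.choose (k - 1) * n.choose k : ℚ) / n) * X ^ k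

-- `N(n, i + 1)`, the `i`-th coefficient of `N_n / X`; it vanishes for `i ≥ n`.
def narayanaCoeff (n i : ℕ) : ℚ := n.choose i * n.choose (i + 1) / n

lemma natCast_mul_narayanaCoeff (n i : ℕ) :
    n * narayanaCoeff n i = n.choose i * n.choose (i + 1) := by
  rcases n.eq_zero_or_pos with rfl | hn
  · simp
  · rw [narayanaCoeff]; field_simp

lemma narayanaCoeff_succ_succ (n i : ℕ) :
    n * (n + 1) * narayanaCoeff n i = (i + 1) * (i + 2) * narayanaCoeff (n + 1) (i + 1) := by
  have h₁ := congr(($(Nat.add_one_mul_choose_eq n i) : ℚ))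
  have h₂ := congr(($(Nat.add_one_mul_choose_eq n (i + 1)) : ℚ))
  have e₀ := natCast_mul_narayanaCoeff n i
  have e₁ := natCast_mul_narayanaCoeff (n + 1) (i + 1)
  push_cast at h₁ h₂ e₁
  refine mul_left_cancel₀ (n.cast_add_one_ne_zero (R := ℚ)) ?_
  linear_combination (n + 1 : ℚ) ^ 2 * e₀ - (i + 1) * (i + 2) * e₁
    + ((n + 1) * n.choose (i + 1) : ℚ) * h₁ + ((n + 1).choose (i + 1) * (i + 1) : ℚ) * h₂

lemma narayanaCoeff_succ_left (n i : ℕ) :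
    n * (n + 1) * narayanaCoeff n i = (n - i) * (n + 1 - i) * narayanaCoeff (n + 1) i := by
  have h₁ := Nat.cast_choose_mul_add_one (R := ℚ) n i
  have h₂ := Nat.cast_choose_mul_add_one (R := ℚ) n (i + 1)
  have e₀ := natCast_mul_narayanaCoeff n i
  have e₁ := natCast_mul_narayanaCoeff (n + 1) i
  push_cast at h₁ h₂ e₁
  refine mul_left_cancel₀ (n.cast_add_one_ne_zero (R := ℚ)) ?_
  linear_combination (n + 1 : ℚ) ^ 2 * e₀ - (n - i) * (n + 1 - i) * e₁
    + (n.choose (i + 1) * (n + 1) : ℚ) * h₁ + ((n + 1).choose i * (n + 1 - i) : ℚ) * h₂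

noncomputable def narayanaPolyDivX (n : ℕ) : ℚ[X] :=
  ∑ i ∈ Finset.range n, C (narayanaCoeff n i) * X ^ i

lemma narayanaCoeff_of_le {n i : ℕ} (h : n ≤ i) : narayanaCoeff n i = 0 := by
  simp [narayanaCoeff, Nat.choose_eq_zero_of_lt (Nat.lt_succ_of_le h)]

lemma coeff_narayanaPolyDivX (n i : ℕ) : (narayanaPolyDivX n).coeff i = narayanaCoeff n i := by
  simp only [narayanaPolyDivX, finsetSum_coeff, coeff_C_mul_X_pow, Finset.sum_ite_eq,
    Finset.mem_range, ite_eq_left_iff, not_lt]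
  exact fun h => (narayanaCoeff_of_le h).symm

lemma narayanaPolyQ_eq_X_mul (n : ℕ) : narayanaPolyQ n = X * narayanaPolyDivX n := by
  rw [narayanaPolyQ, narayanaPolyDivX, Finset.mul_sum, ← Finset.Ico_add_one_right_eq_Icc,
    ← zero_add 1, ← Finset.sum_Ico_add', ← Finset.range_eq_Ico]
  refine Finset.sum_congr rfl fun i _ => ?_
  rw [narayanaCoeff, Nat.add_sub_cancel, pow_succ]
  ring

lemma narayanaCoeff_recurrence_zero (m : ℕ) :
    (m + 3) * narayanaCoeff (m + 2) 0 + m * narayanaCoeff m 0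
      = (2 * m + 3) * narayanaCoeff (m + 1) 0 := by
  have R₁ := narayanaCoeff_succ_left (m + 1) 0
  have R₂ := narayanaCoeff_succ_left m 0
  push_cast at R₁ R₂
  refine mul_left_cancel₀ (by positivity : ((m : ℚ) + 1) * (m + 2) ≠ 0) ?_
  linear_combination (m + 2) * R₂ - (m + 3) * R₁

lemma narayanaCoeff_recurrence_one (m : ℕ) :
    (m + 3) * narayanaCoeff (m + 2) 1 + m * (-(2 * narayanaCoeff m 0) + narayanaCoeff m 1)
      = (2 * m + 3) * (narayanaCoeff (m + 1) 0 + narayanaCoeff (m + 1) 1) := by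
  have R₁ := narayanaCoeff_succ_succ (m + 1) 0
  have R₂ := narayanaCoeff_succ_left (m + 1) 1
  have R₃ := narayanaCoeff_succ_succ m 0
  have R₄ := narayanaCoeff_succ_left m 1
  push_cast at R₁ R₂ R₃ R₄
  refine mul_left_cancel₀ (by positivity : ((m : ℚ) + 1) ^ 2 * (m + 2) ≠ 0) ?_
  linear_combination (m + 1) * (m + 2) * (R₄ - 2 * R₃)
    + ((m - 1) * m - 4 - (2 * m + 3) * (m + 1) : ℚ) * R₂ - (2 * m + 3) * (m + 1) * R₁

lemma narayanaCoeff_recurrence (m k : ℕ) :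
    (m + 3) * narayanaCoeff (m + 2) (k + 2)
        + m * (narayanaCoeff m k - 2 * narayanaCoeff m (k + 1) + narayanaCoeff m (k + 2))
      = (2 * m + 3) * (narayanaCoeff (m + 1) (k + 1) + narayanaCoeff (m + 1) (k + 2)) := by
  have R₁ := narayanaCoeff_succ_succ (m + 1) (k + 1)
  have R₂ := narayanaCoeff_succ_left (m + 1) (k + 2)
  have R₃ := narayanaCoeff_succ_succ m k
  have R₄ := narayanaCoeff_succ_left m (k + 1)
  have R₅ := narayanaCoeff_succ_left m (k + 2)
  push_cast at R₁ R₂ R₃ R₄ R₅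
  -- every term reduces to `narayanaCoeff (m + 2) (k + 2)` once the denominators are cleared
  refine mul_left_cancel₀ (by positivity : ((m : ℚ) + 1) ^ 2 * (m + 2) ≠ 0) ?_
  linear_combination (m + 1) * (m + 2) * (R₃ - 2 * R₄ + R₅)
    + ((k + 1) * (k + 2) - 2 * (m - k - 1) * (m - k) - (2 * m + 3) * (m + 1) : ℚ) * R₁
    + ((m - k - 2) * (m - k - 1) - (2 * m + 3) * (m + 1) : ℚ) * R₂

lemma narayanaPolyDivX_recurrence (m : ℕ) :
    C ((m : ℚ) + 3) * narayanaPolyDivX (m + 2) + C (m : ℚ) * (X - 1) ^ 2 * narayanaPolyDivX m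
      = C (2 * (m : ℚ) + 3) * (X + 1) * narayanaPolyDivX (m + 1) := by
  have hsq : ∀ p : ℚ[X], (X - 1) ^ 2 * p = X ^ 2 * p - 2 * (X * p) + p := fun p => by ring
  have hlin : ∀ p : ℚ[X], (X + 1) * p = X * p + p := fun p => by ring
  ext k
  simp only [mul_assoc, hsq, hlin, coeff_C_mul, coeff_add, coeff_sub, coeff_X_pow_mul',
    coeff_ofNat_mul, coeff_narayanaPolyDivX]
  rcases k with _ | _ | k
  · simpa using narayanaCoeff_recurrence_zero m
  · simpa [coeff_narayanaPolyDivX] using narayanaCoeff_recurrence_one m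
  · simpa [coeff_narayanaPolyDivX] using narayanaCoeff_recurrence m k

lemma narayanaCoeff_pos {n i : ℕ} (h : i < n) : 0 < narayanaCoeff n i := by
  have h₁ : 0 < n.choose i := Nat.choose_pos h.le
  have h₂ : 0 < n.choose (i + 1) := Nat.choose_pos h
  have h₃ : 0 < n := by omega
  unfold narayanaCoeff
  positivity

lemma narayanaPolyDivX_one : narayanaPolyDivX 1 = 1 := by
  simp [narayanaPolyDivX, narayanaCoeff]

lemma isCoprime_narayanaPolyDivX_X_sub_one {n : ℕ} (hn : 0 < n) :
    IsCoprime (narayanaPolyDivX n) (X - 1) := by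
  have heval : 0 < (narayanaPolyDivX n).eval 1 := by
    simp only [narayanaPolyDivX, eval_finsetSum, eval_mul, eval_C, eval_pow, eval_X, one_pow,
      mul_one]
    exact Finset.sum_pos (fun i hi => narayanaCoeff_pos (Finset.mem_range.mp hi))
      ⟨0, Finset.mem_range.mpr hn⟩
  rw [← C_1, isCoprime_comm, (irreducible_X_sub_C 1).coprime_iff_not_dvd, dvd_iff_isRoot]
  exact heval.ne'

lemma isCoprime_narayanaPolyDivX_succ (m : ℕ) :
    IsCoprime (narayanaPolyDivX (m + 2)) (narayanaPolyDivX (m + 1)) := by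
  induction m with
  | zero => simp [narayanaPolyDivX_one, isCoprime_one_right]
  | succ m ih =>
    have hunit : IsUnit (C ((m + 1 : ℕ) : ℚ)) := isUnit_C.mpr (Ne.isUnit (by positivity))
    have hb : IsCoprime (narayanaPolyDivX (m + 2)) (C ((m + 1 : ℕ) : ℚ) * (X - 1) ^ 2) := by
      rw [isCoprime_mul_unit_left_right hunit]
      exact (isCoprime_narayanaPolyDivX_X_sub_one (by omega)).pow_right
    have hrec := narayanaPolyDivX_recurrence (m + 1)
    exact (IsCoprime.of_mul_add_mul_eq_mul hrec ih hb).symm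

/-- The gcd of N_n and N_{n-1} over ℚ is x (up to units). -/
theorem narayana_gcd (n : ℕ) (hn : 2 ≤ n) :
    Associated (EuclideanDomain.gcd (narayanaPolyQ n) (narayanaPolyQ (n - 1))) X := by
  obtain ⟨m, rfl⟩ := Nat.exists_eq_add_of_le' hn
  rw [Nat.add_sub_assoc (by norm_num), narayanaPolyQ_eq_X_mul, narayanaPolyQ_eq_X_mul]
  exact (isCoprime_narayanaPolyDivX_succ m).associated_gcd_mul_mul X
end

section
/- For every x ∈ ℂ with |Ψ₁(x)| = |Ψ₂(x)|, where Ψ₁(x) = x + 1 + 2√x and Ψ₂(x) = x + 1 - 2√x for some branch √x = A + iB of the square root, one has A = 0; consequently the equimodular set {x : |x+1+2√x| = |x+1-2√x|} is contained in the non-positive real axis. -/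
/-!
Since `s ^ 2 + 1 ± 2 * s = (s ± 1) ^ 2`, equimodularity says that `s` is equidistant from
`1` and `-1`, i.e. lies on the imaginary axis; then `x = s ^ 2 = -(Im s) ^ 2` is a non-positive
real number.
-/

namespace Complex

theorem norm_add_one_eq_norm_sub_one_iff {z : ℂ} : ‖z + 1‖ = ‖z - 1‖ ↔ z.re = 0 := by
  rw [← sq_eq_sq₀ (norm_nonneg _) (norm_nonneg _), Complex.sq_norm, Complex.sq_norm,
    normSq_apply, normSq_apply]
  simp only [add_re, sub_re, one_re, add_im, sub_im, one_im, add_zero, sub_zero]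
  constructor <;> intro h <;> linarith

theorem re_eq_zero_of_norm_sq_add_one_add_eq_sub {s : ℂ}
    (h : ‖s ^ 2 + 1 + 2 * s‖ = ‖s ^ 2 + 1 - 2 * s‖) : s.re = 0 := by
  have hsq : ‖s + 1‖ ^ 2 = ‖s - 1‖ ^ 2 := by
    rwa [← norm_pow, ← norm_pow, show (s + 1) ^ 2 = s ^ 2 + 1 + 2 * s by ring,
      show (s - 1) ^ 2 = s ^ 2 + 1 - 2 * s by ring]
  exact norm_add_one_eq_norm_sub_one_iff.mp <|
    (sq_eq_sq₀ (norm_nonneg _) (norm_nonneg _)).mp hsq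

theorem sq_eq_neg_im_sq_of_re_eq_zero {s : ℂ} (hs : s.re = 0) :
    s ^ 2 = ((-s.im ^ 2 : ℝ) : ℂ) := by
  apply ext <;> simp [sq, hs]

end Complex

/-- If |x+1+2√x| = |x+1-2√x| for a branch √x = s, then Re(s) = 0; consequently the
equimodular set is contained in the non-positive real axis. -/
theorem equimodular_set_nonpositive_axis :
    (∀ s : ℂ, ‖s ^ 2 + 1 + 2 * s‖ = ‖s ^ 2 + 1 - 2 * s‖ →
      s.re = 0) ∧
    ∀ x : ℂ, (∃ s : ℂ, s ^ 2 = x ∧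
        ‖x + 1 + 2 * s‖ = ‖x + 1 - 2 * s‖) →
      x.im = 0 ∧ x.re ≤ 0 := by
  refine ⟨fun _ => Complex.re_eq_zero_of_norm_sq_add_one_add_eq_sub, ?_⟩
  rintro x ⟨s, rfl, h⟩
  have hre := Complex.re_eq_zero_of_norm_sq_add_one_add_eq_sub h
  rw [Complex.sq_eq_neg_im_sq_of_re_eq_zero hre, Complex.ofReal_im, Complex.ofReal_re]
  exact ⟨rfl, neg_nonpos.mpr (sq_nonneg _)⟩
end
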